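/- Let α ≤ 1/e be a positive real constant and let f : ℕ → ℕ satisfy f(h) ≤ ⌊α·h⌋ for all sufficiently large h. Then θ_1(f(h), h) → 0 as h → ∞. -/

import Mathlib

/-!
A 1-accessible path has gaps at most 1, so it visits every depth: it is simply the path to some
leaf with increasing labels. The `h + 1` labels on a fixed path are i.i.d., and the `(h + 1)!`
events "the labels are increasing after permuting them by `τ`" are disjoint and equally likely,
so each has probability at most `1 / (h + 1)!`. A union bound over the `n ^ h` leaves gives
`θ₁(n, h) ≤ n ^ h / (h + 1)!`, and for `n ≤ h / e` we have `n ^ h ≤ (h / e) ^ h ≤ h!`,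
hence `θ₁(n, h) ≤ 1 / (h + 1)`.
-/

open MeasureTheory Filter

/-- A vertex of the complete `n`-ary tree of height `h`: at depth `i ≤ h`,
a vertex is a word of length `i` over an alphabet of size `n`. -/
abbrev TreeVertex (n h : ℕ) : Type := (i : Fin (h + 1)) × (Fin i.val → Fin n)

/-- The vertex at depth `i` on the root-to-leaf path determined by `leaf`:
the length-`i` prefix of `leaf`. -/
def pathVertex {n h : ℕ} (leaf : Fin h → Fin n) (i : Fin (h + 1)) : TreeVertex n h :=
  ⟨i, fun j => leaf ⟨j.val, lt_of_lt_of_le j.isLt (Nat.lt_succ_iff.mp i.isLt)⟩⟩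

/-- The event (set of labelings `ω` of the vertices) that some root-to-leaf path of
the complete `n`-ary tree of height `h` is `k`-accessible: there is a leaf and
indices `0 = r 0 < r 1 < ⋯ < r t = h` with consecutive gaps at most `k` along which
the labels are strictly increasing. -/
def kAccessibleEvent (k n h : ℕ) : Set (TreeVertex n h → ℝ) :=
  {ω | ∃ leaf : Fin h → Fin n, ∃ t : ℕ, ∃ r : Fin (t + 1) → Fin (h + 1),
    StrictMono r ∧ r 0 = 0 ∧ r (Fin.last t) = Fin.last h ∧
    (∀ i : Fin t, (r i.succ).val ≤ (r i.castSucc).val + k) ∧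
    StrictMono fun i => ω (pathVertex leaf (r i))}

/-- The vertices are labelled by i.i.d. Uniform[0,1] random variables: the product
over all vertices of Lebesgue measure restricted to `[0,1]`. -/
noncomputable def treeLabelMeasure (n h : ℕ) : Measure (TreeVertex n h → ℝ) :=
  Measure.pi fun _ => (volume : Measure ℝ).restrict (Set.Icc 0 1)

/-- `theta k n h` is the probability that the labelled complete `n`-ary tree of
height `h` contains a `k`-accessible root-to-leaf path. -/
noncomputable def theta (k n h : ℕ) : ℝ :=
  (treeLabelMeasure n h (kAccessibleEvent k n h)).toReal

open scoped Nat ENNReal Function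

instance : IsProbabilityMeasure ((volume : Measure ℝ).restrict (Set.Icc 0 1)) :=
  ⟨by simp⟩

theorem Equiv.Perm.eq_of_strictMono_comp {α : Type*} [LinearOrder α] {m : ℕ} {g : Fin m → α}
    {σ τ : Equiv.Perm (Fin m)} (hσ : StrictMono (g ∘ σ)) (hτ : StrictMono (g ∘ τ)) : σ = τ := by
  have eq_sort : ∀ π : Equiv.Perm (Fin m), StrictMono (g ∘ π) → π = Tuple.sort g :=
    fun π hπ => Tuple.eq_sort_iff.2
      ⟨hπ.monotone, fun i j hij heq => absurd heq (hπ.injective.ne hij.ne)⟩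
  rw [eq_sort σ hσ, eq_sort τ hτ]

theorem measurableSet_setOf_strictMono_comp {ι : Type*} {m : ℕ} (v : Fin m → ι) :
    MeasurableSet {ω : ι → ℝ | StrictMono (ω ∘ v)} := by
  have : {ω : ι → ℝ | StrictMono (ω ∘ v)} =
      ⋂ (i : Fin m) (j : Fin m) (_ : i < j), {ω | ω (v i) < ω (v j)} := by
    ext ω
    simp [StrictMono]
  rw [this]
  exact .iInter fun i => .iInter fun j => .iInter fun _ =>
    measurableSet_lt (measurable_pi_apply _) (measurable_pi_apply _)

section StrictMonoCoordinates

variable {ι : Type*} [Fintype ι] (μ : Measure ℝ)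

theorem measure_pi_preimage_comp_perm [SigmaFinite μ] (σ : Equiv.Perm ι) (s : Set (ι → ℝ)) :
    Measure.pi (fun _ => μ) ((· ∘ σ) ⁻¹' s) = Measure.pi (fun _ => μ) s := by
  have := (measurePreserving_piCongrLeft (fun _ : ι => μ) σ.symm).measure_preimage_equiv s
  convert this using 3
  ext ω x
  simpa [MeasurableEquiv.coe_piCongrLeft] using
    (Equiv.piCongrLeft_apply_apply (fun _ => ℝ) σ.symm ω (σ x)).symm

theorem measure_pi_setOf_strictMono_comp_le [IsProbabilityMeasure μ] {m : ℕ} (v : Fin m → ι)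
    (hv : Function.Injective v) :
    Measure.pi (fun _ => μ) {ω | StrictMono (ω ∘ v)} ≤ (m ! : ℝ≥0∞)⁻¹ := by
  classical
  set P := Measure.pi fun _ : ι => μ
  set S : Equiv.Perm (Fin m) → Set (ι → ℝ) := fun τ => {ω | StrictMono (ω ∘ v ∘ τ)}
  have measure_S : ∀ τ, P (S τ) = P (S 1) := by
    intro τ
    set σ := τ.extendDomain (Equiv.ofInjective v hv)
    have hσ : ∀ i, σ (v i) = v (τ i) := τ.extendDomain_apply_image (Equiv.ofInjective v hv)
    calc P (S τ) = P ((· ∘ σ) ⁻¹' S 1) := by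
          congr 1; ext ω; simp [S, Function.comp_def, hσ]
      _ = P (S 1) := measure_pi_preimage_comp_perm μ σ (S 1)
  have disjoint_S : Pairwise (Disjoint on S) := fun τ τ' hne =>
    Set.disjoint_left.2 fun ω h h' => hne (Equiv.Perm.eq_of_strictMono_comp (g := ω ∘ v) h h')
  rw [ENNReal.le_inv_iff_mul_le]
  calc P (S 1) * m ! = ∑ τ, P (S τ) := by simp [measure_S, mul_comm, Fintype.card_perm]
    _ = P (⋃ τ, S τ) := by
      rw [measure_iUnion disjoint_S fun τ => measurableSet_setOf_strictMono_comp _, tsum_fintype]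
    _ ≤ 1 := prob_le_one

end StrictMonoCoordinates

theorem Fin.val_eq_of_strictMono_of_succ_le {t h : ℕ} {r : Fin (t + 1) → Fin (h + 1)}
    (hr : StrictMono r) (hr0 : r 0 = 0)
    (hgap : ∀ i : Fin t, (r i.succ).val ≤ (r i.castSucc).val + 1) (i : Fin (t + 1)) :
    (r i).val = i.val := by
  induction i using Fin.induction with
  | zero => simp [hr0]
  | succ i ih =>
    have := hr (Fin.castSucc_lt_succ (i := i))
    rw [Fin.lt_def] at this
    have := hgap i
    simp only [Fin.val_castSucc, Fin.val_succ] at *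
    omega

theorem kAccessibleEvent_one_subset (n h : ℕ) :
    kAccessibleEvent 1 n h ⊆ ⋃ leaf : Fin h → Fin n, {ω | StrictMono (ω ∘ pathVertex leaf)} := by
  rintro ω ⟨leaf, t, r, hr, hr0, hrl, hgap, hmono⟩
  have hr_val := Fin.val_eq_of_strictMono_of_succ_le hr hr0 hgap
  obtain rfl : t = h := by simpa [hrl] using (hr_val (Fin.last t)).symm
  obtain rfl : r = id := funext fun i => Fin.ext (hr_val i)
  exact Set.mem_iUnion.2 ⟨leaf, hmono⟩

theorem theta_one_le (n h : ℕ) : theta 1 n h ≤ (n : ℝ) ^ h / ((h + 1)! : ℝ) := by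
  have path_le : ∀ leaf : Fin h → Fin n,
      treeLabelMeasure n h {ω | StrictMono (ω ∘ pathVertex leaf)} ≤ ((h + 1)! : ℝ≥0∞)⁻¹ :=
    fun leaf => measure_pi_setOf_strictMono_comp_le _ (pathVertex leaf)
      fun i j hij => congrArg Sigma.fst hij
  have event_le : treeLabelMeasure n h (kAccessibleEvent 1 n h) ≤ n ^ h * ((h + 1)! : ℝ≥0∞)⁻¹ :=
    calc _ ≤ ∑ leaf : Fin h → Fin n, treeLabelMeasure n h {ω | StrictMono (ω ∘ pathVertex leaf)} :=
          (measure_mono (kAccessibleEvent_one_subset n h)).trans (measure_iUnion_fintype_le _ _)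
      _ ≤ _ := (Finset.sum_le_sum fun leaf _ => path_le leaf).trans_eq (by simp)
  have := ENNReal.toReal_mono (by simp [ENNReal.mul_eq_top, Nat.factorial_ne_zero]) event_le
  simpa [theta, div_eq_mul_inv] using this

theorem div_exp_one_pow_le_factorial (n : ℕ) : ((n : ℝ) / Real.exp 1) ^ n ≤ n ! := by
  rw [div_pow, Real.exp_one_pow, div_le_iff₀ (Real.exp_pos _), mul_comm,
    ← div_le_iff₀ (by positivity)]
  exact Real.pow_div_factorial_le_exp _ n.cast_nonneg n

theorem theta_one_le_one_div_succ {n h : ℕ} (hn : (n : ℝ) ≤ h / Real.exp 1) :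
    theta 1 n h ≤ 1 / (h + 1) :=
  calc theta 1 n h ≤ (n : ℝ) ^ h / ((h + 1)! : ℝ) := theta_one_le n h
    _ ≤ (h ! : ℝ) / ((h + 1)! : ℝ) := by
      gcongr
      exact (pow_le_pow_left₀ n.cast_nonneg hn h).trans (div_exp_one_pow_le_factorial h)
    _ = 1 / (h + 1) := by
      rw [Nat.factorial_succ, Nat.cast_mul, div_mul_cancel_right₀ (by positivity)]
      push_cast; ring

theorem theta_one_tendsto_zero_of_floor_linear_general
    (α : ℝ) (hα : α ≤ (Real.exp 1)⁻¹) (f : ℕ → ℕ)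
    (hf : ∀ᶠ h : ℕ in atTop, f h ≤ ⌊α * (h : ℝ)⌋₊) :
    Tendsto (fun h : ℕ => theta 1 (f h) h) atTop (nhds 0) := by
  refine squeeze_zero' (.of_forall fun h => ENNReal.toReal_nonneg) ?_
    tendsto_one_div_add_atTop_nhds_zero_nat
  filter_upwards [hf] with h hfh
  apply theta_one_le_one_div_succ
  calc (f h : ℝ) ≤ ⌊α * h⌋₊ := by exact_mod_cast hfh
    _ ≤ ⌊h / Real.exp 1⌋₊ := by gcongr; rw [div_eq_inv_mul]; gcongr
    _ ≤ h / Real.exp 1 := Nat.floor_le (by positivity)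

theorem theta_one_tendsto_zero_of_floor_linear
    (α : ℝ) (hα0 : 0 < α) (hα : α ≤ (Real.exp 1)⁻¹) (f : ℕ → ℕ)
    (hf : ∀ᶠ h : ℕ in atTop, f h ≤ ⌊α * (h : ℝ)⌋₊) :
    Tendsto (fun h : ℕ => theta 1 (f h) h) atTop (nhds 0) :=
  theta_one_tendsto_zero_of_floor_linear_general α hα f hf
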